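/- Let Y ∈ ℝ^{n×d}, x* ∈ ℝ^n, y ∈ ℝ^n, β > 0, and let D_1, …, D_ℓ be the ReLU sign-pattern matrices of Y. Consider the residual primal training problem with m neurons: p*_m = inf over u_1,…,u_m ∈ ℝ^d and v_1,…,v_m ∈ ℝ of (1/2)‖y + Σ_{j=1}^m (Y u_j)_+ v_j − x*‖_2² + (β/2) Σ_{j=1}^m (‖u_j‖_2² + |v_j|²). Then there exists m* ≤ n such that for every m ≥ m* + 1, p*_m equals the optimal value of the convex dual program with labels x* − y, namely inf over (w_i, z_i)_{i=1}^ℓ with (2D_i − I)Y w_i ≥ 0 and (2D_i − I)Y z_i ≥ 0 componentwise of (1/2)‖Σ_{i=1}^ℓ D_i Y (w_i − z_i) − (x* − y)‖_2² + β Σ_{i=1}^ℓ (‖w_i‖_2 + ‖z_i‖_2). -/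

import Mathlib

open Matrix Finset

noncomputable section

/-- Euclidean (ℓ2) norm of a vector in ℝ^k. -/
def l2 {k : ℕ} (x : Fin k → ℝ) : ℝ := Real.sqrt (∑ i, (x i) ^ 2)

/-- Componentwise ReLU. -/
def relu {k : ℕ} (x : Fin k → ℝ) : Fin k → ℝ := fun i => max (x i) 0

/-- The set of ReLU sign-pattern matrices of `Y`: diagonal 0/1 matrices
`Diag(1_{Yu ≥ 0})` as `u` ranges over the closed unit ball. -/
noncomputable def signPatterns {n d : ℕ} (Y : Matrix (Fin n) (Fin d) ℝ) :
    Set (Matrix (Fin n) (Fin n) ℝ) :=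
  { M | ∃ u : Fin d → ℝ, l2 u ≤ 1 ∧
      M = Matrix.diagonal (fun i => if 0 ≤ Y.mulVec u i then (1 : ℝ) else 0) }

/-- Primal (non-convex) training objective with `m` neurons. -/
def primalObj {n d : ℕ} (Y : Matrix (Fin n) (Fin d) ℝ) (xs : Fin n → ℝ) (β : ℝ)
    (m : ℕ) (u : Fin m → Fin d → ℝ) (v : Fin m → ℝ) : ℝ :=
  (1 / 2) * l2 ((∑ j, v j • relu (Y.mulVec (u j))) - xs) ^ 2
    + (β / 2) * ∑ j, (l2 (u j) ^ 2 + |v j| ^ 2)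

/-- Optimal value of the primal training problem with `m` neurons. -/
def pStar {n d : ℕ} (Y : Matrix (Fin n) (Fin d) ℝ) (xs : Fin n → ℝ) (β : ℝ)
    (m : ℕ) : ℝ :=
  sInf { c | ∃ u : Fin m → Fin d → ℝ, ∃ v : Fin m → ℝ, c = primalObj Y xs β m u v }

/-- Dual feasibility: `(2 Dᵢ − I) Y wᵢ ≥ 0` componentwise for every `i`. -/
def dualFeasible {n d ℓ : ℕ} (Y : Matrix (Fin n) (Fin d) ℝ)
    (D : Fin ℓ → Matrix (Fin n) (Fin n) ℝ) (w : Fin ℓ → Fin d → ℝ) : Prop :=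
  ∀ i j, 0 ≤ ((2 • D i - 1).mulVec (Y.mulVec (w i))) j

/-- Convex dual objective. -/
def dualObj {n d ℓ : ℕ} (Y : Matrix (Fin n) (Fin d) ℝ) (xs : Fin n → ℝ) (β : ℝ)
    (D : Fin ℓ → Matrix (Fin n) (Fin n) ℝ) (w z : Fin ℓ → Fin d → ℝ) : ℝ :=
  (1 / 2) * l2 ((∑ i, (D i).mulVec (Y.mulVec (w i - z i))) - xs) ^ 2
    + β * ∑ i, (l2 (w i) + l2 (z i))

/-- Optimal value of the convex dual program. -/
def dStar {n d ℓ : ℕ} (Y : Matrix (Fin n) (Fin d) ℝ) (xs : Fin n → ℝ) (β : ℝ)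
    (D : Fin ℓ → Matrix (Fin n) (Fin n) ℝ) : ℝ :=
  sInf { c | ∃ w z : Fin ℓ → Fin d → ℝ,
    dualFeasible Y D w ∧ dualFeasible Y D z ∧ c = dualObj Y xs β D w z }

end

/-- Residual (skip-connection) primal training objective with `m` neurons:
the input `y` is added to the two-layer network output. -/
noncomputable def primalObjRes {n d : ℕ} (Y : Matrix (Fin n) (Fin d) ℝ)
    (xs y : Fin n → ℝ) (β : ℝ) (m : ℕ) (u : Fin m → Fin d → ℝ) (v : Fin m → ℝ) : ℝ :=
  (1 / 2) * l2 (y + (∑ j, v j • relu (Y.mulVec (u j))) - xs) ^ 2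
    + (β / 2) * ∑ j, (l2 (u j) ^ 2 + |v j| ^ 2)

/-!
A primal network is turned into a dual point by grouping its neurons according to their ReLU
sign pattern `Dᵢ`: neurons with `vⱼ ≥ 0` are collected into `wᵢ`, the others into `zᵢ`. Feasibility
makes `Dᵢ Y wᵢ = (Y wᵢ)₊`, and AM-GM `|v| ‖u‖ ≤ (‖u‖² + v²) / 2` bounds the group norms by the
weight decay. Conversely, a feasible dual point produces the vector `∑ᵢ (Y wᵢ)₊ − (Y zᵢ)₊`, which is
`W = ∑ᵢ (‖wᵢ‖ + ‖zᵢ‖)` times a convex combination of single-neuron outputs `c (Y a)₊` with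
`‖a‖, |c| ≤ 1`. By Carathéodory at most `n + 1` such neurons are needed; rescaling each of them
by the square root of `W` times its weight, and padding with zero neurons, realises the dual
value with any `m ≥ n + 1` neurons. The skip connection only shifts the labels to `x* − y`.
-/

lemma l2_eq_norm {k : ℕ} (x : Fin k → ℝ) : l2 x = ‖WithLp.toLp 2 x‖ := by
  simp only [l2, EuclideanSpace.norm_eq, Real.norm_eq_abs, sq_abs]

lemma l2_nonneg {k : ℕ} (x : Fin k → ℝ) : 0 ≤ l2 x := Real.sqrt_nonneg _

lemma l2_eq_zero_iff {k : ℕ} {x : Fin k → ℝ} : l2 x = 0 ↔ x = 0 := by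
  rw [l2_eq_norm, norm_eq_zero, WithLp.toLp_eq_zero]

@[simp]
lemma l2_zero {k : ℕ} : l2 (0 : Fin k → ℝ) = 0 := by simp [l2]

lemma l2_smul {k : ℕ} (c : ℝ) (x : Fin k → ℝ) : l2 (c • x) = |c| * l2 x := by
  rw [l2_eq_norm, l2_eq_norm, WithLp.toLp_smul, norm_smul, Real.norm_eq_abs]

lemma l2_sum_smul_le {k : ℕ} {ι : Type*} (s : Finset ι) {c : ι → ℝ} (hc : ∀ j ∈ s, 0 ≤ c j)
    (x : ι → Fin k → ℝ) : l2 (∑ j ∈ s, c j • x j) ≤ ∑ j ∈ s, c j * l2 (x j) := by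
  simp only [l2_eq_norm, WithLp.toLp_sum, WithLp.toLp_smul]
  refine (norm_sum_le _ _).trans (Finset.sum_le_sum fun j hj => ?_)
  rw [norm_smul, Real.norm_of_nonneg (hc j hj)]

lemma relu_smul {k : ℕ} {c : ℝ} (hc : 0 ≤ c) (x : Fin k → ℝ) : relu (c • x) = c • relu x := by
  funext i
  simp only [relu, Pi.smul_apply, smul_eq_mul, mul_max_of_nonneg _ _ hc, mul_zero]

lemma two_smul_diagonal_sub_one_mulVec_apply {k : ℕ} (g x : Fin k → ℝ) (i : Fin k) :
    ((2 • diagonal g - 1) *ᵥ x) i = (2 * g i - 1) * x i := by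
  rw [← diagonal_one, ← diagonal_smul, diagonal_sub, mulVec_diagonal, Pi.smul_apply, two_nsmul,
    two_mul]

lemma nonneg_mulVec_sum_smul {p q : ℕ} (M : Matrix (Fin p) (Fin q) ℝ) {ι : Type*}
    (s : Finset ι) {c : ι → ℝ} (hc : ∀ j ∈ s, 0 ≤ c j) {x : ι → Fin q → ℝ}
    (hx : ∀ j ∈ s, 0 ≤ M *ᵥ x j) : 0 ≤ M *ᵥ ∑ j ∈ s, c j • x j := by
  rw [mulVec_sum]
  exact Finset.sum_nonneg fun j hj => by
    rw [mulVec_smul]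
    exact smul_nonneg (hc j hj) (hx j hj)

open scoped Pointwise in
lemma sum_smul_mem_smul_convexHull {E : Type*} [AddCommGroup E] [Module ℝ E] {s : Set E}
    (hs : s.Nonempty) {ι : Type*} (t : Finset ι) {r : ι → ℝ} (hr : ∀ i ∈ t, 0 ≤ r i) {p : ι → E}
    (hp : ∀ i ∈ t, p i ∈ s) : ∑ i ∈ t, r i • p i ∈ (∑ i ∈ t, r i) • convexHull ℝ s := by
  rcases (sum_nonneg hr).eq_or_lt with h | h
  · have hr0 : ∀ i ∈ t, r i = 0 := (sum_eq_zero_iff_of_nonneg hr).mp h.symm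
    rw [← h, Set.zero_smul_set (convexHull_nonempty_iff.mpr hs),
      sum_eq_zero fun i hi => by rw [hr0 i hi, zero_smul]]
    exact Set.zero_mem_zero
  · refine Set.mem_smul_set.mpr ⟨t.centerMass r p, t.centerMass_mem_convexHull hr h hp, ?_⟩
    rw [centerMass, smul_smul, mul_inv_cancel₀ h.ne', one_smul]

section SignPattern

variable {n d : ℕ} (Y : Matrix (Fin n) (Fin d) ℝ)

noncomputable def signPattern (a : Fin d → ℝ) : Matrix (Fin n) (Fin n) ℝ :=
  diagonal fun i => if 0 ≤ (Y *ᵥ a) i then 1 else 0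

lemma signPattern_mem_signPatterns (a : Fin d → ℝ) : signPattern Y a ∈ signPatterns Y := by
  have hpos : 0 < l2 a + 1 := by linarith [l2_nonneg a]
  refine ⟨(l2 a + 1)⁻¹ • a, ?_, ?_⟩
  · rw [l2_smul, abs_of_pos (inv_pos.mpr hpos), inv_mul_le_iff₀ hpos]
    linarith
  · simp only [signPattern, mulVec_smul, Pi.smul_apply, smul_eq_mul,
      mul_nonneg_iff_of_pos_left (inv_pos.mpr hpos)]

lemma signPattern_mulVec (a : Fin d → ℝ) : signPattern Y a *ᵥ (Y *ᵥ a) = relu (Y *ᵥ a) := by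
  funext i
  rw [signPattern, mulVec_diagonal, relu]
  split_ifs with h
  · rw [one_mul, max_eq_left h]
  · rw [zero_mul, max_eq_right (not_le.mp h).le]

lemma signPattern_feasible (a : Fin d → ℝ) : 0 ≤ (2 • signPattern Y a - 1) *ᵥ (Y *ᵥ a) := by
  intro i
  rw [Pi.zero_apply, signPattern, two_smul_diagonal_sub_one_mulVec_apply]
  split_ifs with h
  · nlinarith
  · nlinarith [not_le.mp h]

lemma mulVec_eq_relu_of_mem_signPatterns {M : Matrix (Fin n) (Fin n) ℝ}
    (hM : M ∈ signPatterns Y) {x : Fin n → ℝ} (hx : 0 ≤ (2 • M - 1) *ᵥ x) : M *ᵥ x = relu x := by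
  obtain ⟨a, -, rfl⟩ := hM
  funext i
  have hi := hx i
  rw [Pi.zero_apply, two_smul_diagonal_sub_one_mulVec_apply] at hi
  rw [mulVec_diagonal, relu]
  split_ifs at hi ⊢
  · rw [one_mul, max_eq_left (by linarith)]
  · rw [zero_mul, max_eq_right (by linarith)]

end SignPattern

section Network

variable {n d : ℕ} (Y : Matrix (Fin n) (Fin d) ℝ) {ι : Type*} [Fintype ι]

def netOutput (u : ι → Fin d → ℝ) (v : ι → ℝ) : Fin n → ℝ := ∑ j, v j • relu (Y *ᵥ u j)

noncomputable def weightDecay (u : ι → Fin d → ℝ) (v : ι → ℝ) : ℝ :=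
  ∑ j, (l2 (u j) ^ 2 + |v j| ^ 2)

lemma two_mul_sum_abs_mul_l2_le_weightDecay (u : ι → Fin d → ℝ) (v : ι → ℝ) :
    2 * ∑ j, |v j| * l2 (u j) ≤ weightDecay u v := by
  rw [mul_sum]
  exact sum_le_sum fun j _ => by nlinarith [two_mul_le_add_sq (|v j|) (l2 (u j))]

variable {ℓ : ℕ} {D : Fin ℓ → Matrix (Fin n) (Fin n) ℝ}

lemma dualFeasible_fiberwise_sum {u : ι → Fin d → ℝ} {idx : ι → Fin ℓ}
    (hidx : ∀ j, D (idx j) = signPattern Y (u j)) {c : ι → ℝ} (hc : ∀ j, 0 ≤ c j) :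
    dualFeasible Y D fun i => ∑ j with idx j = i, c j • u j := by
  intro i
  show 0 ≤ (2 • D i - 1) *ᵥ (Y *ᵥ ∑ j with idx j = i, c j • u j)
  rw [mulVec_mulVec]
  refine nonneg_mulVec_sum_smul _ _ (fun j _ => hc j) fun j hj => ?_
  rw [← mulVec_mulVec, ← (mem_filter.mp hj).2, hidx]
  exact signPattern_feasible Y (u j)

lemma exists_dualFeasible_of_neurons (hD : signPatterns Y ⊆ Set.range D)
    (u : ι → Fin d → ℝ) (v : ι → ℝ) :
    ∃ w z : Fin ℓ → Fin d → ℝ, dualFeasible Y D w ∧ dualFeasible Y D z ∧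
      ∑ i, D i *ᵥ (Y *ᵥ (w i - z i)) = netOutput Y u v ∧
      2 * ∑ i, (l2 (w i) + l2 (z i)) ≤ weightDecay u v := by
  classical
  choose idx hidx using fun j => hD (signPattern_mem_signPatterns Y (u j))
  refine ⟨fun i => ∑ j with idx j = i, max (v j) 0 • u j,
    fun i => ∑ j with idx j = i, max (-v j) 0 • u j,
    dualFeasible_fiberwise_sum Y hidx fun j => le_max_right _ _,
    dualFeasible_fiberwise_sum Y hidx fun j => le_max_right _ _, ?_, ?_⟩
  · rw [netOutput, ← sum_fiberwise univ idx]
    refine sum_congr rfl fun i _ => ?_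
    simp only [← sum_sub_distrib, ← sub_smul, max_zero_sub_eq_self, mulVec_sum, mulVec_smul]
    refine sum_congr rfl fun j hj => ?_
    rw [← (mem_filter.mp hj).2, hidx, signPattern_mulVec]
  · refine le_trans ?_ (two_mul_sum_abs_mul_l2_le_weightDecay u v)
    rw [← sum_fiberwise univ idx]
    gcongr with i
    calc _ ≤ ∑ j with idx j = i, max (v j) 0 * l2 (u j)
          + ∑ j with idx j = i, max (-v j) 0 * l2 (u j) :=
          add_le_add (l2_sum_smul_le _ (fun j _ => le_max_right _ _) u)
            (l2_sum_smul_le _ (fun j _ => le_max_right _ _) u)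
      _ = ∑ j with idx j = i, |v j| * l2 (u j) := by
          simp only [← sum_add_distrib, ← add_mul, max_zero_add_max_neg_zero_eq_abs_self]

lemma exists_fin_neurons_of_card_le {m : ℕ} (hm : Fintype.card ι ≤ m) (u : ι → Fin d → ℝ)
    (v : ι → ℝ) : ∃ (u' : Fin m → Fin d → ℝ) (v' : Fin m → ℝ),
      netOutput Y u' v' = netOutput Y u v ∧ weightDecay u' v' = weightDecay u v := by
  obtain ⟨r, rfl⟩ := Nat.exists_eq_add_of_le hm
  let e := Fintype.equivFin ι
  refine ⟨Fin.append (u ∘ e.symm) 0, Fin.append (v ∘ e.symm) 0, ?_, ?_⟩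
  · simp [netOutput, Fin.sum_univ_add, e.symm.sum_comp (fun j => v j • relu (Y *ᵥ u j))]
  · simp [weightDecay, Fin.sum_univ_add, e.symm.sum_comp (fun j => l2 (u j) ^ 2 + v j ^ 2)]

def neuronAtoms : Set (Fin n → ℝ) :=
  {g | ∃ (a : Fin d → ℝ) (c : ℝ), l2 a ≤ 1 ∧ |c| ≤ 1 ∧ c • relu (Y *ᵥ a) = g}

lemma zero_mem_neuronAtoms : (0 : Fin n → ℝ) ∈ neuronAtoms Y :=
  ⟨0, 0, by simp, by simp, zero_smul _ _⟩

lemma neg_mem_neuronAtoms {g : Fin n → ℝ} (hg : g ∈ neuronAtoms Y) : -g ∈ neuronAtoms Y := by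
  obtain ⟨a, c, ha, hc, rfl⟩ := hg
  exact ⟨a, -c, ha, by rwa [abs_neg], neg_smul _ _⟩

lemma exists_mem_neuronAtoms_relu_eq_l2_smul (a : Fin d → ℝ) :
    ∃ g ∈ neuronAtoms Y, relu (Y *ᵥ a) = l2 a • g := by
  rcases eq_or_ne (l2 a) 0 with ha | ha
  · refine ⟨0, zero_mem_neuronAtoms Y, ?_⟩
    rw [l2_eq_zero_iff.mp ha, mulVec_zero, smul_zero]
    funext i
    simp [relu]
  · have hinv : 0 ≤ (l2 a)⁻¹ := inv_nonneg.mpr (l2_nonneg a)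
    refine ⟨relu (Y *ᵥ ((l2 a)⁻¹ • a)), ⟨_, 1, ?_, by simp, one_smul _ _⟩, ?_⟩
    · rw [l2_smul, abs_of_nonneg hinv, inv_mul_cancel₀ ha]
    · rw [mulVec_smul, relu_smul hinv, smul_smul, mul_inv_cancel₀ ha, one_smul]

lemma exists_neuron_of_mem_neuronAtoms {g : Fin n → ℝ} (hg : g ∈ neuronAtoms Y) {t : ℝ}
    (ht : 0 ≤ t) : ∃ (a : Fin d → ℝ) (c : ℝ),
      c • relu (Y *ᵥ a) = t • g ∧ l2 a ^ 2 + |c| ^ 2 ≤ 2 * t := by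
  obtain ⟨a, c, ha, hc, rfl⟩ := hg
  refine ⟨√t • a, √t * c, ?_, ?_⟩
  · rw [mulVec_smul, relu_smul (Real.sqrt_nonneg t), smul_smul, smul_smul, mul_right_comm,
      Real.mul_self_sqrt ht]
  · rw [l2_smul, abs_mul, abs_of_nonneg (Real.sqrt_nonneg t), mul_pow, mul_pow, Real.sq_sqrt ht]
    have : l2 a ^ 2 + |c| ^ 2 ≤ 2 := by
      nlinarith [pow_le_one₀ (n := 2) (l2_nonneg a) ha, pow_le_one₀ (n := 2) (abs_nonneg c) hc]
    nlinarith

lemma exists_neurons_of_mem_convexHull {q : Fin n → ℝ} (hq : q ∈ convexHull ℝ (neuronAtoms Y))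
    {W : ℝ} (hW : 0 ≤ W) {m : ℕ} (hm : n + 1 ≤ m) :
    ∃ (u : Fin m → Fin d → ℝ) (v : Fin m → ℝ),
      netOutput Y u v = W • q ∧ weightDecay u v ≤ 2 * W := by
  obtain ⟨κ, _, g, μ, hgA, hind, hμ, hμsum, rfl⟩ := eq_pos_convex_span_of_mem_convexHull hq
  choose a c hout hdecay using fun i =>
    exists_neuron_of_mem_neuronAtoms Y (hgA ⟨i, rfl⟩) (mul_nonneg hW (hμ i).le)
  -- Carathéodory: the atoms `g` are affinely independent in `ℝⁿ`, so there are at most `n + 1`.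
  have hcard : Fintype.card κ ≤ m := by
    have := (Submodule.finrank_le (vectorSpan ℝ (Set.range g))).trans_eq
      (Module.finrank_fin_fun ℝ)
    linarith [hind.card_le_finrank_succ]
  obtain ⟨u, v, hu, hv⟩ := exists_fin_neurons_of_card_le Y hcard a c
  refine ⟨u, v, ?_, ?_⟩
  · rw [hu, netOutput]
    simp only [hout, smul_sum, smul_smul]
  · calc weightDecay u v = ∑ i, (l2 (a i) ^ 2 + |c i| ^ 2) := hv
      _ ≤ ∑ i, 2 * (W * μ i) := sum_le_sum fun i _ => hdecay i
      _ = 2 * W := by rw [← mul_sum, ← mul_sum, hμsum, mul_one]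

lemma exists_neurons_of_dualFeasible (hD : Set.range D ⊆ signPatterns Y)
    {w z : Fin ℓ → Fin d → ℝ} (hw : dualFeasible Y D w) (hz : dualFeasible Y D z) {m : ℕ}
    (hm : n + 1 ≤ m) :
    ∃ (u : Fin m → Fin d → ℝ) (v : Fin m → ℝ),
      netOutput Y u v = ∑ i, D i *ᵥ (Y *ᵥ (w i - z i)) ∧
      weightDecay u v ≤ 2 * ∑ i, (l2 (w i) + l2 (z i)) := by
  have hrelu : ∀ x, dualFeasible Y D x → ∀ i, D i *ᵥ (Y *ᵥ x i) = relu (Y *ᵥ x i) :=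
    fun x hx i => mulVec_eq_relu_of_mem_signPatterns Y (hD ⟨i, rfl⟩) (hx i)
  choose g hg hrelu_eq using exists_mem_neuronAtoms_relu_eq_l2_smul Y
  have hmem := sum_smul_mem_smul_convexHull ⟨0, zero_mem_neuronAtoms Y⟩ univ
    (r := Sum.elim (fun i => l2 (w i)) (fun i => l2 (z i)))
    (p := Sum.elim (fun i => g (w i)) (fun i => -g (z i)))
    (by rintro (i | i) - <;> exact l2_nonneg _)
    (by rintro (i | i) -; exacts [hg _, neg_mem_neuronAtoms Y (hg _)])
  simp only [Fintype.sum_sum_type, Sum.elim_inl, Sum.elim_inr, smul_neg, ← sum_add_distrib,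
    ← sub_eq_add_neg, ← hrelu_eq, ← hrelu w hw, ← hrelu z hz, ← mulVec_sub] at hmem
  obtain ⟨q, hq, hs⟩ := hmem
  obtain ⟨u, v, hout, hdecay⟩ := exists_neurons_of_mem_convexHull Y hq
    (sum_nonneg fun i _ => add_nonneg (l2_nonneg (w i)) (l2_nonneg (z i))) hm
  exact ⟨u, v, hout.trans hs, hdecay⟩

end Network

section Duality

variable {n d ℓ : ℕ} {Y : Matrix (Fin n) (Fin d) ℝ} {b : Fin n → ℝ} {β : ℝ}
  {D : Fin ℓ → Matrix (Fin n) (Fin n) ℝ} {m : ℕ} {u : Fin m → Fin d → ℝ} {v : Fin m → ℝ}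
  {w z : Fin ℓ → Fin d → ℝ}

lemma primalObj_le_dualObj (hβ : 0 ≤ β)
    (hout : netOutput Y u v = ∑ i, D i *ᵥ (Y *ᵥ (w i - z i)))
    (hdecay : weightDecay u v ≤ 2 * ∑ i, (l2 (w i) + l2 (z i))) :
    primalObj Y b β m u v ≤ dualObj Y b β D w z := by
  have := mul_le_mul_of_nonneg_left hdecay hβ
  change 1 / 2 * l2 (netOutput Y u v - b) ^ 2 + β / 2 * weightDecay u v ≤ _
  rw [dualObj, hout]
  linarith

lemma dualObj_le_primalObj (hβ : 0 ≤ β)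
    (hout : ∑ i, D i *ᵥ (Y *ᵥ (w i - z i)) = netOutput Y u v)
    (hdecay : 2 * ∑ i, (l2 (w i) + l2 (z i)) ≤ weightDecay u v) :
    dualObj Y b β D w z ≤ primalObj Y b β m u v := by
  have := mul_le_mul_of_nonneg_left hdecay hβ
  change _ ≤ 1 / 2 * l2 (netOutput Y u v - b) ^ 2 + β / 2 * weightDecay u v
  rw [dualObj, hout]
  linarith

theorem pStar_eq_dStar (hβ : 0 ≤ β) (hD : Set.range D = signPatterns Y) (hm : n + 1 ≤ m) :
    pStar Y b β m = dStar Y b β D := by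
  refine csInf_eq_csInf_of_forall_exists_le ?_ ?_
  · rintro _ ⟨u, v, rfl⟩
    obtain ⟨w, z, hw, hz, hout, hdecay⟩ := exists_dualFeasible_of_neurons Y hD.ge u v
    exact ⟨_, ⟨w, z, hw, hz, rfl⟩, dualObj_le_primalObj hβ hout hdecay⟩
  · rintro _ ⟨w, z, hw, hz, rfl⟩
    obtain ⟨u, v, hout, hdecay⟩ := exists_neurons_of_dualFeasible Y hD.le hw hz hm
    exact ⟨_, ⟨u, v, rfl⟩, primalObj_le_dualObj hβ hout hdecay⟩

end Duality

lemma primalObjRes_eq_primalObj {n d : ℕ} (Y : Matrix (Fin n) (Fin d) ℝ) (xs y : Fin n → ℝ)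
    (β : ℝ) (m : ℕ) (u : Fin m → Fin d → ℝ) (v : Fin m → ℝ) :
    primalObjRes Y xs y β m u v = primalObj Y (xs - y) β m u v := by
  rw [primalObjRes, primalObj, sub_sub_eq_add_sub, add_comm y]

theorem strong_duality_residual_general {n d ℓ : ℕ} (Y : Matrix (Fin n) (Fin d) ℝ)
    (xs y : Fin n → ℝ) (β : ℝ) (hβ : 0 < β)
    (D : Fin ℓ → Matrix (Fin n) (Fin n) ℝ)
    (hrange : Set.range D = signPatterns Y) :
    ∃ mstar ≤ n, ∀ m ≥ mstar + 1,
      sInf { c | ∃ u : Fin m → Fin d → ℝ, ∃ v : Fin m → ℝ,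
          c = primalObjRes Y xs y β m u v }
        = dStar Y (xs - y) β D := by
  refine ⟨n, le_rfl, fun m hm => ?_⟩
  simp only [primalObjRes_eq_primalObj]
  exact pStar_eq_dStar hβ.le hrange hm

/-- **Strong duality for residual networks.** The residual primal
problem has a strong dual given by the convex dual program with labels `x* − y`. -/
theorem strong_duality_residual {n d ℓ : ℕ} (Y : Matrix (Fin n) (Fin d) ℝ)
    (xs y : Fin n → ℝ) (β : ℝ) (hβ : 0 < β)
    (D : Fin ℓ → Matrix (Fin n) (Fin n) ℝ)
    (hinj : Function.Injective D) (hrange : Set.range D = signPatterns Y) :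
    ∃ mstar ≤ n, ∀ m ≥ mstar + 1,
      sInf { c | ∃ u : Fin m → Fin d → ℝ, ∃ v : Fin m → ℝ,
          c = primalObjRes Y xs y β m u v }
        = dStar Y (xs - y) β D :=
  strong_duality_residual_general Y xs y β hβ D hrange
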